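/- arXiv:2601.00319 — 2 statements merged into one kernel-verified Lean document; each statement's English description precedes it below -/
import Mathlib

section
/- Let H be a Hilbert space, S ∈ B(H) an isometry with (S*)^n → 0 in the strong operator topology, and X ∈ B(H). Suppose the sequence X_n = ∑_{k=0}^{n-1} S^{n-1-k} X (S*)^k is uniformly bounded in norm. Then there exists A ∈ B(H) with ‖A‖ ≤ sup_n ‖X_n‖ such that X = A − S* A S*. -/
open ContinuousLinearMap

/-!
Write `T = S*`, so that `T S = 1`. The operators `B n = ∑_{k<n} T^k X T^k` satisfy
`B n = T^(n-1) X_n`, hence `‖B n‖ ≤ sup_m ‖X_m‖`, and they telescope: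
`B n - T (B n) T = X - T^n X T^n`, which tends to `X` strongly because `T^n → 0` strongly
and `‖T‖ ≤ 1`. Norm balls of `B(H)` are compact in the weak operator topology, so along an
ultrafilter finer than `atTop` the `B n` converge weakly to some `A` with
`‖A‖ ≤ sup_m ‖X_m‖`; since `C ↦ C - T C T` is weakly continuous, `A - T A T = X`.
-/

open Finset Filter Topology ContinuousLinearMapWOT
open scoped InnerProductSpace

section Ring

variable {R : Type*} [Ring R]

theorem sum_pow_mul_mul_pow_sub_mul_mul (t x : R) (n : ℕ) :
    ∑ k ∈ range n, t ^ k * x * t ^ k - t * (∑ k ∈ range n, t ^ k * x * t ^ k) * t =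
      x - t ^ n * x * t ^ n := by
  have hshift (k : ℕ) : t * (t ^ k * x * t ^ k) * t = t ^ (k + 1) * x * t ^ (k + 1) := by
    simp only [← pow_succ, mul_assoc]
    rw [← mul_assoc t, ← pow_succ']
  rw [mul_sum, sum_mul, ← sum_sub_distrib]
  simp_rw [hshift]
  rw [sum_range_sub', pow_zero, one_mul, mul_one]

theorem sum_pow_mul_mul_pow_eq_pow_mul_sum {s t : R} (hts : t * s = 1) (x : R) (n : ℕ) :
    ∑ k ∈ range n, t ^ k * x * t ^ k =
      t ^ (n - 1) * ∑ k ∈ range n, s ^ (n - 1 - k) * x * t ^ k := by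
  rw [mul_sum]
  refine sum_congr rfl fun k hk => ?_
  have hsplit : t ^ (n - 1) = t ^ k * t ^ (n - 1 - k) := by
    rw [← pow_add]; congr 1; have := mem_range.1 hk; omega
  rw [hsplit]
  simp only [mul_assoc]
  rw [← mul_assoc (t ^ (n - 1 - k)), pow_mul_pow_eq_one _ hts, one_mul]

end Ring

section Contraction

variable {𝕜 E : Type*} [NontriviallyNormedField 𝕜] [NormedAddCommGroup E] [NormedSpace 𝕜 E]
  {T : E →L[𝕜] E}

theorem ContinuousLinearMap.norm_pow_le_one (hT : ‖T‖ ≤ 1) (n : ℕ) : ‖T ^ n‖ ≤ 1 := by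
  rcases n.eq_zero_or_pos with rfl | hn
  · exact norm_id_le
  · exact (norm_pow_le' T hn).trans (pow_le_one₀ (norm_nonneg T) hT)

theorem norm_sum_pow_mul_mul_pow_le {S : E →L[𝕜] E} (hTS : T * S = 1) (hT : ‖T‖ ≤ 1)
    (X : E →L[𝕜] E) (n : ℕ) :
    ‖∑ k ∈ range n, T ^ k * X * T ^ k‖ ≤ ‖∑ k ∈ range n, S ^ (n - 1 - k) * X * T ^ k‖ := by
  rw [sum_pow_mul_mul_pow_eq_pow_mul_sum hTS]
  exact (norm_mul_le _ _).trans (mul_le_of_le_one_left (norm_nonneg _) (norm_pow_le_one hT _))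

theorem tendsto_pow_mul_mul_pow_apply_zero (hT : ‖T‖ ≤ 1)
    (hT0 : ∀ x, Tendsto (fun n => (T ^ n) x) atTop (𝓝 0)) (X : E →L[𝕜] E) (x : E) :
    Tendsto (fun n => (T ^ n * X * T ^ n) x) atTop (𝓝 0) := by
  have hX0 : Tendsto (fun n => X ((T ^ n) x)) atTop (𝓝 0) := by
    simpa only [map_zero, Function.comp_def] using (X.continuous.tendsto 0).comp (hT0 x)
  refine squeeze_zero_norm (fun n => ?_) (tendsto_zero_iff_norm_tendsto_zero.1 hX0)
  calc ‖(T ^ n * X * T ^ n) x‖ = ‖(T ^ n) (X ((T ^ n) x))‖ := rfl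
    _ ≤ ‖X ((T ^ n) x)‖ :=
      (T ^ n).le_of_opNorm_le (norm_pow_le_one hT n) _ |>.trans_eq (one_mul _)

end Contraction

section WeakOperatorTopology

theorem ContinuousLinearMapWOT.tendsto_ofCLM_of_tendsto_apply {𝕜 E F ι : Type*} [NormedField 𝕜]
    [AddCommGroup E] [TopologicalSpace E] [Module 𝕜 E] [AddCommGroup F] [TopologicalSpace F]
    [Module 𝕜 F] [IsTopologicalAddGroup F] [ContinuousConstSMul 𝕜 F] {l : Filter ι}
    {f : ι → E →L[𝕜] F} {A : E →L[𝕜] F} (h : ∀ x, Tendsto (fun i => f i x) l (𝓝 (A x))) :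
    Tendsto (fun i => ofCLM (f i)) l (𝓝 (ofCLM A)) :=
  tendsto_iff_forall_dual_apply_tendsto.2 fun x y => (y.continuous.tendsto _).comp (h x)

variable {𝕜 E F ι : Type*} [RCLike 𝕜] [NormedAddCommGroup E] [NormedSpace 𝕜 E]
  [NormedAddCommGroup F] [InnerProductSpace 𝕜 F]

theorem exists_tendsto_inner_of_norm_le (u : Ultrafilter ι) {M : ℝ} {B : ι → E →L[𝕜] F}
    (hB : ∀ i, ‖B i‖ ≤ M) :
    ∃ L : E → F → 𝕜, (∀ x y, ‖L x y‖ ≤ M * ‖x‖ * ‖y‖) ∧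
      ∀ x y, Tendsto (fun i => ⟪B i x, y⟫_𝕜) u (𝓝 (L x y)) := by
  let K : Set (E → F → 𝕜) :=
    Set.univ.pi fun x => Set.univ.pi fun y => Metric.closedBall 0 (M * ‖x‖ * ‖y‖)
  have hK : IsCompact K :=
    isCompact_univ_pi fun x => isCompact_univ_pi fun y => isCompact_closedBall _ _
  have hBK : ∀ i, (fun x y => ⟪B i x, y⟫_𝕜) ∈ K := fun i x _ y _ => by
    rw [mem_closedBall_zero_iff]
    calc ‖⟪B i x, y⟫_𝕜‖ ≤ ‖B i x‖ * ‖y‖ := norm_inner_le_norm _ _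
      _ ≤ M * ‖x‖ * ‖y‖ := by gcongr; exact (B i).le_of_opNorm_le (hB i) x
  obtain ⟨L, hLK, hL⟩ :=
    hK.ultrafilter_le_nhds (u.map _) (le_principal_iff.2 (mem_map.2 (univ_mem' hBK)))
  refine ⟨L, fun x y => mem_closedBall_zero_iff.1 (hLK x trivial y trivial), fun x y => ?_⟩
  exact tendsto_pi_nhds.1 (tendsto_pi_nhds.1 hL x) y

variable [CompleteSpace F]

theorem exists_norm_le_tendsto_ofCLM (u : Ultrafilter ι) {M : ℝ} {B : ι → E →L[𝕜] F}
    (hB : ∀ i, ‖B i‖ ≤ M) :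
    ∃ A : E →L[𝕜] F, ‖A‖ ≤ M ∧ Tendsto (fun i => ofCLM (B i)) u (𝓝 (ofCLM A)) := by
  obtain ⟨L, hLM, hL⟩ := exists_tendsto_inner_of_norm_le u hB
  have hM : 0 ≤ M := by
    obtain ⟨i⟩ := u.neBot.nonempty_of_mem univ_mem
    exact (norm_nonneg _).trans (hB i)
  -- `L` is sesquilinear as a pointwise limit of sesquilinear forms; Riesz then represents it.
  let b : E →L⋆[𝕜] F →L[𝕜] 𝕜 := LinearMap.mkContinuous₂ (LinearMap.mk₂'ₛₗ _ _ L
    (fun x x' y => tendsto_nhds_unique (hL (x + x') y) (by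
      simpa only [map_add, inner_add_left] using (hL x y).add (hL x' y)))
    (fun c x y => tendsto_nhds_unique (hL (c • x) y) (by
      simpa only [map_smul, inner_smul_left, smul_eq_mul] using (hL x y).const_mul _))
    (fun x y y' => tendsto_nhds_unique (hL x (y + y')) (by
      simpa only [inner_add_right] using (hL x y).add (hL x y')))
    (fun c x y => tendsto_nhds_unique (hL x (c • y)) (by
      simpa only [inner_smul_right, RingHom.id_apply, smul_eq_mul] using
        (hL x y).const_mul c))) M hLM
  let A : E →L[𝕜] F :=
    (InnerProductSpace.toDual 𝕜 F).symm.toContinuousLinearEquiv.toContinuousLinearMap.comp b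
  have hA : ∀ x y, ⟪A x, y⟫_𝕜 = L x y := fun x y => InnerProductSpace.toDual_symm_apply
  refine ⟨A, ?_, tendsto_iff_forall_inner_apply_tendsto.2 fun x y => ?_⟩
  · refine A.opNorm_le_bound hM fun x => ?_
    calc ‖A x‖ = ‖b x‖ := (InnerProductSpace.toDual 𝕜 F).symm.norm_map (b x)
      _ ≤ M * ‖x‖ := b.le_of_opNorm_le (LinearMap.mkContinuous₂_norm_le _ hM hLM) x
  · simp only [ofCLM_apply]
    rw [← inner_conj_symm, hA]
    simpa only [Function.comp_def, inner_conj_symm] using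
      (RCLike.continuous_conj.tendsto _).comp (hL x y)

end WeakOperatorTopology

/-- Let `S` be an isometry on a separable Hilbert space `H` whose adjoint powers tend to `0` in
the strong operator topology, and let `X ∈ B(H)`. If the sequence
`X_n = ∑_{k=0}^{n-1} S^{n-1-k} X (S*)^k` is uniformly bounded in norm, then there exists
`A ∈ B(H)` with `‖A‖ ≤ sup_n ‖X_n‖` such that `X = A − S* A S*`. -/
theorem stmt4 {H : Type*} [NormedAddCommGroup H] [InnerProductSpace ℂ H] [CompleteSpace H]
    (S X : H →L[ℂ] H) (hS : adjoint S * S = 1)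
    (hSOT : ∀ x : H, Filter.Tendsto (fun n : ℕ => ((adjoint S) ^ n) x) Filter.atTop (nhds 0))
    (hbdd : BddAbove (Set.range fun n : ℕ =>
      ‖∑ k ∈ Finset.range n, S ^ (n - 1 - k) * X * (adjoint S) ^ k‖)) :
    ∃ A : H →L[ℂ] H,
      ‖A‖ ≤ ⨆ n : ℕ, ‖∑ k ∈ Finset.range n, S ^ (n - 1 - k) * X * (adjoint S) ^ k‖ ∧
      X = A - adjoint S * A * adjoint S := by
  set T := adjoint S
  have hT : ‖T‖ ≤ 1 := by
    have hSiso : ∀ x, ‖S x‖ = ‖x‖ := S.norm_map_iff_adjoint_comp_self.2 hS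
    rw [LinearIsometryEquiv.norm_map]
    exact S.opNorm_le_bound zero_le_one fun x => by rw [hSiso, one_mul]
  let B n := ∑ k ∈ range n, T ^ k * X * T ^ k
  have hB n : ‖B n‖ ≤ ⨆ n : ℕ, ‖∑ k ∈ range n, S ^ (n - 1 - k) * X * T ^ k‖ :=
    (norm_sum_pow_mul_mul_pow_le hS hT X n).trans (le_ciSup hbdd n)
  obtain ⟨u, hu⟩ := exists_ultrafilter_le (atTop : Filter ℕ)
  obtain ⟨A, hAM, hA⟩ := exists_norm_le_tendsto_ofCLM u hB
  have hcont : Continuous fun C : H →WOT[ℂ] H => C - ofCLM T * C * ofCLM T := by fun_prop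
  have hX : Tendsto (fun n => ofCLM (B n - T * B n * T)) atTop (𝓝 (ofCLM X)) := by
    simp_rw [B, sum_pow_mul_mul_pow_sub_mul_mul]
    refine tendsto_ofCLM_of_tendsto_apply fun x => ?_
    simpa using (tendsto_pow_mul_mul_pow_apply_zero hT hSOT X x).const_sub (X x)
  exact ⟨A, hAM,
    ofCLM_injective (tendsto_nhds_unique (hX.mono_left hu) ((hcont.tendsto _).comp hA))⟩
end

section
/- Let H be a Hilbert space and S ∈ B(H) an isometry. If there exists A ∈ B(H) with S A − A S = T where T satisfies S* T S = T (a Toeplitz-type relation), then T = 0. -/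
/-!
Since `S* S = 1`, the commutator relation gives `A - S* A S = S* T`, and the Toeplitz relation
makes `S* T` a fixed point of `X ↦ S* X S`. Telescoping yields `A - S*ⁿ A Sⁿ = n • S* T`, whose
norm is at most `2 ‖A‖` because `S` and `S*` are contractions. Hence `S* T = 0`, and
`T = S* T S = 0`.
-/

open ContinuousLinearMap

theorem pow_mul_mul_pow_eq_self {R : Type*} [Monoid R] {a b c : R} (h : a * c * b = c) (n : ℕ) :
    a ^ n * c * b ^ n = c := by
  induction n with
  | zero => simp
  | succ n ih =>
    calc a ^ (n + 1) * c * b ^ (n + 1) = a ^ n * (a * c * b) * b ^ n := by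
          rw [pow_succ a, pow_succ' b]; simp only [mul_assoc]
      _ = c := by rw [h, ih]

-- `x - a ^ n x b ^ n = ∑_{k < n} a ^ k (x - a x b) b ^ k`, and every summand equals `x - a x b`.
theorem sub_pow_mul_mul_pow_eq_nsmul {R : Type*} [Ring R] {a b x : R}
    (h : a * (x - a * x * b) * b = x - a * x * b) (n : ℕ) :
    x - a ^ n * x * b ^ n = n • (x - a * x * b) := by
  induction n with
  | zero => simp
  | succ n ih =>
    calc x - a ^ (n + 1) * x * b ^ (n + 1)
        = (x - a ^ n * x * b ^ n) + a ^ n * (x - a * x * b) * b ^ n := by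
          rw [pow_succ, pow_succ']; noncomm_ring
      _ = (n + 1) • (x - a * x * b) := by rw [ih, pow_mul_mul_pow_eq_self h, succ_nsmul]

theorem norm_pow_mul_mul_pow_le {R : Type*} [SeminormedRing R] {a b : R} (ha : ‖a‖ ≤ 1)
    (hb : ‖b‖ ≤ 1) (x : R) (n : ℕ) : ‖a ^ n * x * b ^ n‖ ≤ ‖x‖ := by
  induction n with
  | zero => simp
  | succ n ih =>
    calc ‖a ^ (n + 1) * x * b ^ (n + 1)‖ = ‖a * (a ^ n * x * b ^ n) * b‖ := by
          rw [pow_succ' a, pow_succ b]; simp only [mul_assoc]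
      _ ≤ ‖a‖ * ‖a ^ n * x * b ^ n‖ * ‖b‖ := norm_mul₃_le
      _ ≤ 1 * ‖x‖ * 1 := by gcongr
      _ = ‖x‖ := by ring

theorem eq_zero_of_forall_norm_nsmul_le {E : Type*} [NormedAddCommGroup E] [NormedSpace ℝ E]
    {x : E} {C : ℝ} (h : ∀ n : ℕ, ‖n • x‖ ≤ C) : x = 0 := by
  by_contra hx
  obtain ⟨n, hn⟩ := exists_nat_gt (C / ‖x‖)
  have hC := h n
  rw [RCLike.norm_nsmul ℝ, nsmul_eq_mul, ← le_div_iff₀ (norm_pos_iff.mpr hx)] at hC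
  linarith

theorem eq_zero_of_mul_mul_eq_self_of_commutator_eq {E : Type*} [NormedRing E] [NormedSpace ℝ E]
    {a b s t : E} (hbs : b * s = 1) (hb : ‖b‖ ≤ 1) (hs : ‖s‖ ≤ 1) (ht : b * t * s = t)
    (ha : s * a - a * s = t) : t = 0 := by
  have hstep : a - b * a * s = b * t := by
    rw [← ha, mul_sub, ← mul_assoc, hbs, one_mul, mul_assoc]
  have htel (n : ℕ) : a - b ^ n * a * s ^ n = n • (b * t) := by
    refine hstep ▸ sub_pow_mul_mul_pow_eq_nsmul ?_ n
    rw [hstep, mul_assoc b (b * t), ht]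
  have hbt : b * t = 0 := eq_zero_of_forall_norm_nsmul_le (C := 2 * ‖a‖) fun n ↦
    calc ‖n • (b * t)‖ = ‖a - b ^ n * a * s ^ n‖ := by rw [htel]
      _ ≤ ‖a‖ + ‖b ^ n * a * s ^ n‖ := norm_sub_le _ _
      _ ≤ ‖a‖ + ‖a‖ := by gcongr; exact norm_pow_mul_mul_pow_le hb hs a n
      _ = 2 * ‖a‖ := by ring
  rw [← ht, hbt, zero_mul]

theorem CStarRing.norm_le_one_of_star_mul_self_eq_one {E : Type*} [NormedRing E]
    [StarRing E] [CStarRing E] {s : E} (hs : star s * s = 1) : ‖s‖ ≤ 1 := by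
  have hone : ‖(1 : E)‖ * ‖(1 : E)‖ = ‖(1 : E)‖ := by
    simpa using (CStarRing.norm_star_mul_self (x := (1 : E))).symm
  have hs' : ‖s‖ * ‖s‖ = ‖(1 : E)‖ := by rw [← hs, CStarRing.norm_star_mul_self]
  have hone_le : ‖(1 : E)‖ ≤ 1 := by nlinarith [norm_nonneg (1 : E)]
  nlinarith [norm_nonneg s]

/-- Let `S` be an isometry (`S* S = I`) on a Hilbert space `H`. If there exists `A ∈ B(H)` with
`S A − A S = T` where `T` satisfies the Toeplitz-type relation `S* T S = T`, then `T = 0`. -/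
theorem stmt7 {H : Type*} [NormedAddCommGroup H] [InnerProductSpace ℂ H] [CompleteSpace H]
    (S T : H →L[ℂ] H) (hS : adjoint S * S = 1)
    (hT : adjoint S * T * S = T) (h : ∃ A : H →L[ℂ] H, S * A - A * S = T) :
    T = 0 := by
  obtain ⟨A, hA⟩ := h
  rw [← star_eq_adjoint] at hS hT
  have hS_le : ‖S‖ ≤ 1 := CStarRing.norm_le_one_of_star_mul_self_eq_one hS
  exact eq_zero_of_mul_mul_eq_self_of_commutator_eq hS (by rwa [norm_star]) hS_le hT hA
end
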